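/- For every joint probability distribution p on {1,…,I}×{1,…,J} and every λ > 0, T_A + T_B ≥ 0, with equality T_A + T_B = 0 if and only if p_{i,j} = p_{i·} p_{·j} for all i, j (i.e., if and only if X ⊥ Y). -/

import Mathlib

open MeasureTheory ProbabilityTheory Real Finset Filter Topology

noncomputable section

/-- Row marginal. -/
def rowM {I J : ℕ} (p : Fin I → Fin J → ℝ) (i : Fin I) : ℝ := ∑ j, p i j

/-- Column marginal. -/
def colM {I J : ℕ} (p : Fin I → Fin J → ℝ) (j : Fin J) : ℝ := ∑ i, p i j

/-- Joint probability distribution. -/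
def IsJointDist {I J : ℕ} (p : Fin I → Fin J → ℝ) : Prop :=
  (∀ i j, 0 ≤ p i j) ∧ ∑ i, ∑ j, p i j = 1

/-- Independence of the two coordinates. -/
def IndepDist {I J : ℕ} (p : Fin I → Fin J → ℝ) : Prop :=
  ∀ i j, p i j = rowM p i * colM p j

def cLam {I J : ℕ} (l : ℝ) (p : Fin I → Fin J → ℝ) : ℝ := ∑ i, ∑ j, p i j ^ l

/-- Joint power escort distribution. -/
def pStar {I J : ℕ} (l : ℝ) (p : Fin I → Fin J → ℝ) (i : Fin I) (j : Fin J) : ℝ :=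
  p i j ^ l / cLam l p

def rowStar {I J : ℕ} (l : ℝ) (p : Fin I → Fin J → ℝ) (i : Fin I) : ℝ := ∑ j, pStar l p i j
def colStar {I J : ℕ} (l : ℝ) (p : Fin I → Fin J → ℝ) (j : Fin J) : ℝ := ∑ i, pStar l p i j

/-- Row-marginal power escort. -/
def qEsc {I J : ℕ} (l : ℝ) (p : Fin I → Fin J → ℝ) (i : Fin I) : ℝ :=
  rowM p i ^ l / ∑ s, rowM p s ^ l

/-- Column-marginal power escort. -/
def rEsc {I J : ℕ} (l : ℝ) (p : Fin I → Fin J → ℝ) (j : Fin J) : ℝ :=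
  colM p j ^ l / ∑ t, colM p t ^ l

/-- `x ln x` with the convention `0 ln 0 = 0` (automatic since `Real.log 0 = 0`). -/
def mlog (x : ℝ) : ℝ := x * Real.log x

def TA {I J : ℕ} (l : ℝ) (p : Fin I → Fin J → ℝ) : ℝ :=
  (∑ i, ∑ j, mlog (pStar l p i j)) - (∑ i, mlog (qEsc l p i)) - (∑ j, mlog (rEsc l p j))

def TB {I J : ℕ} (l : ℝ) (p : Fin I → Fin J → ℝ) : ℝ :=
  (∑ i, mlog (qEsc l p i)) + (∑ j, mlog (rEsc l p j))
    - (∑ i, mlog (rowStar l p i)) - (∑ j, mlog (colStar l p j))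

/-- Empirical joint distribution from a sample of size `n`. -/
def emp {I J : ℕ} {Ω : Type*} (W : ℕ → Ω → Fin I × Fin J) (n : ℕ) (ω : Ω)
    (i : Fin I) (j : Fin J) : ℝ :=
  (((Finset.range n).filter (fun k => W k ω = (i, j))).card : ℝ) / n

/-- Index set for the vector `v`: all cells except `(I, J)`. -/
abbrev VIdx (I J : ℕ) := {x : Fin (I + 1) × Fin (J + 1) // x ≠ (Fin.last I, Fin.last J)}

/-- Reconstruct a joint distribution from its `IJ-1` free coordinates. -/
def fill {I J : ℕ} (v : VIdx I J → ℝ) : Fin (I + 1) → Fin (J + 1) → ℝ :=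
  fun i j => if h : (i, j) = (Fin.last I, Fin.last J) then 1 - ∑ s, v s else v ⟨(i, j), h⟩

/-- Gradient of `T_A` (as a function of the free coordinates `v`), coordinate `s`. -/
def gradTA {I J : ℕ} (l : ℝ) (p : Fin (I + 1) → Fin (J + 1) → ℝ) (s : VIdx I J) : ℝ :=
  fderiv ℝ (fun w : VIdx I J → ℝ => TA l (fill w)) (fun t => p t.1.1 t.1.2) (Pi.single s 1)

/-- The delta-method variance `σ² = ∇ᵀ Σ(v) ∇`. -/
def sigma2 {I J : ℕ} (l : ℝ) (p : Fin (I + 1) → Fin (J + 1) → ℝ) : ℝ :=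
  ∑ s : VIdx I J, ∑ t : VIdx I J,
    gradTA l p s * ((if s = t then p s.1.1 s.1.2 else 0) - p s.1.1 s.1.2 * p t.1.1 t.1.2)
      * gradTA l p t

/-- Chi-squared measure with `k` degrees of freedom: `Gamma(k/2, 1/2)`. -/
def chiSquared (k : ℝ) : Measure ℝ := gammaMeasure (k / 2) (1 / 2)

/-!
`T_A + T_B` telescopes to the mutual information of the escort distribution `p*`, which is
nonnegative by Gibbs' inequality and vanishes exactly when `p*` is the product of its marginals.
Since `t ↦ t ^ λ` is a multiplicative bijection of `[0, ∞)`, `p*` factorizes iff `p` does.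
-/

open InformationTheory

def mutualInfo {I J : ℕ} (p : Fin I → Fin J → ℝ) : ℝ :=
  (∑ i, ∑ j, mlog (p i j)) - (∑ i, mlog (rowM p i)) - (∑ j, mlog (colM p j))

lemma mlog_sub_mul_log_sub_add_eq_mul_klFun {a q : ℝ} (ha : 0 ≤ a) (hq : 0 < q) :
    mlog a - a * log q - a + q = q * klFun (a / q) := by
  rcases ha.eq_or_lt with rfl | ha
  · simp [mlog, klFun_zero]
  · rw [klFun_apply, log_div ha.ne' hq.ne', mlog]
    field_simp
    ring

lemma mlog_sub_mul_log_sub_add_nonneg_and_eq_zero_iff {a q : ℝ} (ha : 0 ≤ a) (hq : 0 ≤ q)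
    (haq : 0 < a → 0 < q) :
    0 ≤ mlog a - a * log q - a + q ∧ (mlog a - a * log q - a + q = 0 ↔ a = q) := by
  rcases hq.eq_or_lt with rfl | hq
  · obtain rfl : a = 0 := by
      by_contra ha'
      exact (haq (ha.lt_of_ne' ha')).false
    simp [mlog]
  · have hdiv : 0 ≤ a / q := div_nonneg ha hq.le
    rw [mlog_sub_mul_log_sub_add_eq_mul_klFun ha hq, mul_eq_zero, klFun_eq_zero_iff hdiv,
      div_eq_one_iff_eq hq.ne']
    exact ⟨mul_nonneg hq.le (klFun_nonneg hdiv), by simp [hq.ne']⟩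

/-- Gibbs' inequality. -/
theorem sum_mlog_sub_mul_log_nonneg_and_eq_zero_iff {ι : Type*} [Fintype ι] {P Q : ι → ℝ}
    (hP : ∀ x, 0 ≤ P x) (hQ : ∀ x, 0 ≤ Q x) (hPQ : ∀ x, 0 < P x → 0 < Q x)
    (hsum : ∑ x, P x = ∑ x, Q x) :
    0 ≤ ∑ x, (mlog (P x) - P x * log (Q x)) ∧
      (∑ x, (mlog (P x) - P x * log (Q x)) = 0 ↔ P = Q) := by
  have key x := mlog_sub_mul_log_sub_add_nonneg_and_eq_zero_iff (hP x) (hQ x) (hPQ x)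
  have hsplit : ∑ x, (mlog (P x) - P x * log (Q x))
      = ∑ x, (mlog (P x) - P x * log (Q x) - P x + Q x) := by
    simp only [sum_add_distrib, sum_sub_distrib, hsum]
    ring
  rw [hsplit, sum_eq_zero_iff_of_nonneg fun x _ => (key x).1, funext_iff]
  exact ⟨sum_nonneg fun x _ => (key x).1, by simp only [mem_univ, true_implies, (key _).2]⟩

section Marginals

variable {I J : ℕ} {p : Fin I → Fin J → ℝ}

lemma rowM_nonneg (hp : ∀ i j, 0 ≤ p i j) (i : Fin I) : 0 ≤ rowM p i :=
  sum_nonneg fun j _ => hp i j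

lemma colM_nonneg (hp : ∀ i j, 0 ≤ p i j) (j : Fin J) : 0 ≤ colM p j :=
  sum_nonneg fun i _ => hp i j

lemma le_rowM (hp : ∀ i j, 0 ≤ p i j) (i : Fin I) (j : Fin J) : p i j ≤ rowM p i :=
  single_le_sum (fun t _ => hp i t) (mem_univ j)

lemma le_colM (hp : ∀ i j, 0 ≤ p i j) (i : Fin I) (j : Fin J) : p i j ≤ colM p j :=
  single_le_sum (fun s _ => hp s j) (mem_univ i)

lemma sum_rowM : ∑ i, rowM p i = ∑ i, ∑ j, p i j := rfl

lemma sum_colM : ∑ j, colM p j = ∑ i, ∑ j, p i j := sum_comm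

lemma mutualInfo_eq_sum_prod (hp : ∀ i j, 0 ≤ p i j) :
    mutualInfo p = ∑ x : Fin I × Fin J,
      (mlog (p x.1 x.2) - p x.1 x.2 * log (rowM p x.1 * colM p x.2)) := by
  have hlog i j : p i j * log (rowM p i * colM p j)
      = p i j * log (rowM p i) + p i j * log (colM p j) := by
    rcases (hp i j).eq_or_lt with h | h
    · simp [← h]
    · rw [log_mul (h.trans_le (le_rowM hp i j)).ne' (h.trans_le (le_colM hp i j)).ne', mul_add]
  have hrow : ∑ i, ∑ j, p i j * log (rowM p i) = ∑ i, mlog (rowM p i) := by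
    simp only [← sum_mul, mlog, rowM]
  have hcol : ∑ i, ∑ j, p i j * log (colM p j) = ∑ j, mlog (colM p j) := by
    rw [sum_comm]
    simp only [← sum_mul, mlog, colM]
  simp only [Fintype.sum_prod_type, hlog, sum_sub_distrib, sum_add_distrib, hrow, hcol,
    mutualInfo]
  ring

theorem mutualInfo_nonneg_and_eq_zero_iff (hp : IsJointDist p) :
    0 ≤ mutualInfo p ∧ (mutualInfo p = 0 ↔ IndepDist p) := by
  obtain ⟨hp0, hp1⟩ := hp
  have hmass :
      ∑ x : Fin I × Fin J, p x.1 x.2 = ∑ x : Fin I × Fin J, rowM p x.1 * colM p x.2 := by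
    rw [Fintype.sum_prod_type, Fintype.sum_prod_type, ← Fintype.sum_mul_sum, sum_rowM, sum_colM,
      hp1, one_mul]
  have gibbs := sum_mlog_sub_mul_log_nonneg_and_eq_zero_iff (ι := Fin I × Fin J)
    (P := fun x => p x.1 x.2) (Q := fun x => rowM p x.1 * colM p x.2) (fun x => hp0 x.1 x.2)
    (fun x => mul_nonneg (rowM_nonneg hp0 x.1) (colM_nonneg hp0 x.2))
    (fun x h => mul_pos (h.trans_le (le_rowM hp0 x.1 x.2)) (h.trans_le (le_colM hp0 x.1 x.2)))
    hmass
  rwa [← mutualInfo_eq_sum_prod hp0, funext_iff, Prod.forall] at gibbs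

lemma indepDist_iff_exists_mul (hp : ∑ i, ∑ j, p i j = 1) :
    IndepDist p ↔ ∃ f : Fin I → ℝ, ∃ g : Fin J → ℝ, ∀ i j, p i j = f i * g j := by
  refine ⟨fun h => ⟨_, _, h⟩, ?_⟩
  rintro ⟨f, g, hfg⟩ i j
  have hrow : rowM p i = f i * ∑ t, g t := by simp only [rowM, hfg, ← mul_sum]
  have hcol : colM p j = (∑ s, f s) * g j := by simp only [colM, hfg, ← sum_mul]
  have hfg1 : (∑ s, f s) * ∑ t, g t = 1 := by
    rw [← hp, sum_mul]
    simp only [hfg, ← mul_sum]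
  rw [hfg, hrow, hcol]
  linear_combination (-(f i * g j)) * hfg1

end Marginals

section Escort

variable {I J : ℕ} {l : ℝ} {p : Fin I → Fin J → ℝ}

lemma cLam_pos (hp : IsJointDist p) : 0 < cLam l p := by
  obtain ⟨i, -, j, -, hij⟩ : ∃ i ∈ univ, ∃ j ∈ univ, 0 < p i j := by
    by_contra! h
    have hzero : ∑ i, ∑ j, p i j = 0 :=
      sum_eq_zero fun i _ => sum_eq_zero fun j _ => (h i (mem_univ i) j (mem_univ j)).antisymm
        (hp.1 i j)
    simp [hp.2] at hzero
  have hnonneg s t : 0 ≤ p s t ^ l := rpow_nonneg (hp.1 s t) l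
  calc 0 < p i j ^ l := rpow_pos_of_pos hij l
    _ ≤ ∑ t, p i t ^ l := single_le_sum (fun t _ => hnonneg i t) (mem_univ j)
    _ ≤ cLam l p := single_le_sum (f := fun s => ∑ t, p s t ^ l)
        (fun s _ => sum_nonneg fun t _ => hnonneg s t) (mem_univ i)

lemma isJointDist_pStar (hp : IsJointDist p) : IsJointDist (pStar l p) := by
  have hc := cLam_pos (l := l) hp
  refine ⟨fun i j => div_nonneg (rpow_nonneg (hp.1 i j) l) hc.le, ?_⟩
  simp only [pStar, ← sum_div]
  exact div_self hc.ne'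

lemma TA_add_TB_eq_mutualInfo_pStar : TA l p + TB l p = mutualInfo (pStar l p) := by
  simp only [TA, TB, mutualInfo, rowStar, colStar, rowM, colM]
  ring

theorem indepDist_pStar_iff (hl : l ≠ 0) (hp : IsJointDist p) :
    IndepDist (pStar l p) ↔ IndepDist p := by
  have hc := cLam_pos (l := l) hp
  have hstar := isJointDist_pStar (l := l) hp
  constructor
  · intro hind
    refine (indepDist_iff_exists_mul hp.2).2 ⟨fun i => (cLam l p * rowM (pStar l p) i) ^ l⁻¹,
      fun j => colM (pStar l p) j ^ l⁻¹, fun i j => ?_⟩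
    have hpow : p i j ^ l = cLam l p * (rowM (pStar l p) i * colM (pStar l p) j) := by
      rw [← hind i j, pStar, mul_div_cancel₀ _ hc.ne']
    rw [← rpow_rpow_inv (hp.1 i j) hl, hpow, ← mul_assoc,
      mul_rpow (mul_nonneg hc.le (rowM_nonneg hstar.1 i)) (colM_nonneg hstar.1 j)]
  · intro hind
    refine (indepDist_iff_exists_mul hstar.2).2
      ⟨fun i => rowM p i ^ l / cLam l p, fun j => colM p j ^ l, fun i j => ?_⟩
    rw [pStar, hind i j, mul_rpow (rowM_nonneg hp.1 i) (colM_nonneg hp.1 j), div_mul_eq_mul_div]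

end Escort

/-- `T_A + T_B ≥ 0`, with equality if and only if `X ⊥ Y`. -/
theorem TA_add_TB_nonneg_and_eq_zero_iff {I J : ℕ} (l : ℝ) (hl : 0 < l)
    (p : Fin I → Fin J → ℝ) (hp : IsJointDist p) :
    0 ≤ TA l p + TB l p ∧ (TA l p + TB l p = 0 ↔ IndepDist p) := by
  rw [TA_add_TB_eq_mutualInfo_pStar, ← indepDist_pStar_iff hl.ne' hp]
  exact mutualInfo_nonneg_and_eq_zero_iff (isJointDist_pStar hp)

end
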